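/- arXiv:math/9812067 — 2 statements merged into one kernel-verified Lean document; each statement's English description precedes it below -/
import Mathlib

section
/- Let B be the Minkowski bilinear form on ℝ³ given by B((x₁,y₁,z₁),(x₂,y₂,z₂)) = x₁x₂ + y₁y₂ − z₁z₂. Let θ ∈ ℝ and let v, a, b ∈ ℝ³ satisfy B(v,v) = B(a,a) = B(b,b) = 1, B(v,a)² = 1, B(v,b)² = 1, and B(v,a)·B(v,b)·B(a,b) = −cos θ. Set e = v − 2·B(v,a)·a and f = v − 2·B(v,b)·b. Then B(e,f) = −3 − 4·cos θ; in particular −B(e,f) = 3 + 4·cos θ, and if 0 < θ < π then −B(e,f) < 7. -/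
/-- The Minkowski bilinear form on `ℝ³`:
`B((x₁,y₁,z₁),(x₂,y₂,z₂)) = x₁x₂ + y₁y₂ − z₁z₂`. -/
def minkB (u w : Fin 3 → ℝ) : ℝ := u 0 * w 0 + u 1 * w 1 - u 2 * w 2

theorem minkB_sub_smul_sub_smul (v a b : Fin 3 → ℝ) :
    minkB (v - (2 * minkB v a) • a) (v - (2 * minkB v b) • b) =
      minkB v v - 2 * minkB v a ^ 2 - 2 * minkB v b ^ 2 +
        4 * (minkB v a * minkB v b * minkB a b) := by
  simp only [minkB, Pi.sub_apply, Pi.smul_apply, smul_eq_mul]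
  ring

theorem reflection_inner_product_bound_general
    (θ : ℝ) (v a b : Fin 3 → ℝ)
    (hv : minkB v v = 1)
    (hva : (minkB v a) ^ 2 = 1) (hvb : (minkB v b) ^ 2 = 1)
    (hab : minkB v a * minkB v b * minkB a b = -Real.cos θ)
    (e f : Fin 3 → ℝ)
    (he : e = v - (2 * minkB v a) • a)
    (hf : f = v - (2 * minkB v b) • b) :
    minkB e f = -3 - 4 * Real.cos θ ∧
      -minkB e f = 3 + 4 * Real.cos θ ∧
      (0 < θ → θ < Real.pi → -minkB e f < 7) := by
  have hef : minkB e f = -3 - 4 * Real.cos θ := by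
    rw [he, hf, minkB_sub_smul_sub_smul, hv, hva, hvb, hab]
    ring
  refine ⟨hef, by rw [hef]; ring, fun hθ₀ hθπ => ?_⟩
  have hcos : Real.cos θ < 1 := by
    simpa using Real.cos_lt_cos_of_nonneg_of_le_pi le_rfl hθπ.le hθ₀
  linarith

theorem reflection_inner_product_bound
    (θ : ℝ) (v a b : Fin 3 → ℝ)
    (hv : minkB v v = 1) (ha : minkB a a = 1) (hb : minkB b b = 1)
    (hva : (minkB v a) ^ 2 = 1) (hvb : (minkB v b) ^ 2 = 1)
    (hab : minkB v a * minkB v b * minkB a b = -Real.cos θ)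
    (e f : Fin 3 → ℝ)
    (he : e = v - (2 * minkB v a) • a)
    (hf : f = v - (2 * minkB v b) • b) :
    minkB e f = -3 - 4 * Real.cos θ ∧
      -minkB e f = 3 + 4 * Real.cos θ ∧
      (0 < θ → θ < Real.pi → -minkB e f < 7) :=
  reflection_inner_product_bound_general θ v a b hv hva hvb hab e f he hf
end

section
/- Let n₀₁, n₀₂, n₀₃, n₁₂, n₂₃, n₃₁ be natural numbers, each at least 2, satisfying: (I) 1/n₀₁ + 1/n₀₂ + 1/n₁₂ > 1, 1/n₀₂ + 1/n₀₃ + 1/n₂₃ > 1, and 1/n₀₃ + 1/n₀₁ + 1/n₃₁ > 1 (as rational/real inequalities); and (II) 1/n₁₂ + 1/n₂₃ + 1/n₃₁ < 1. Then the multiset {n₀₁, n₀₂, n₀₃} is one of {2,2,2}, {2,2,3}, {2,2,4}, {2,2,5}, {2,3,3}. -/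
/-!
For `i ≠ j`, condition (I) at the vertex `F₀ ∩ Fᵢ ∩ Fⱼ` bounds `1/nᵢⱼ` strictly from below by
`1 - 1/n₀ᵢ - 1/n₀ⱼ`, hence, as `nᵢⱼ` is an integer, by the next larger unit fraction. The
conditions are symmetric under relabelling `F₁, F₂, F₃`, so sort `n₀₁, n₀₂, n₀₃` as `a ≤ b ≤ c`.
If `a ≥ 3`, or `a = b = 2` and `c ≥ 6`, both `nᵢⱼ` next to `c` are forced to be `2`, violating (II).
If `b ≥ 3` and `c ≥ 4`, the three `1/nᵢⱼ` are forced to be at least `1/5`, `1/2`, `1/3`, whose sum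
exceeds `1`, violating (II) again.
-/

theorem one_div_le_one_div_of_one_div_add_one_lt {n : ℕ} (k : ℕ)
    (h : 1 / ((k : ℝ) + 1) < 1 / n) : 1 / (k : ℝ) ≤ 1 / n := by
  have hn_pos : (0 : ℝ) < n :=
    one_div_pos.mp ((by positivity : (0 : ℝ) < 1 / ((k : ℝ) + 1)).trans h)
  have hn : n < k + 1 := by exact_mod_cast lt_of_one_div_lt_one_div (by positivity) h
  exact one_div_le_one_div_of_le hn_pos (by exact_mod_cast Nat.lt_succ_iff.mp hn)

theorem one_div_natCast_le_one_div_natCast {m n : ℕ} (hm : 0 < m) (h : m ≤ n) :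
    (1 : ℝ) / n ≤ 1 / m :=
  one_div_le_one_div_of_le (by positivity) (by exact_mod_cast h)

section FaceAngles

variable {a b c p q r : ℕ}
  (hIab : 1 < (1 : ℝ) / a + 1 / b + 1 / p)
  (hIbc : 1 < (1 : ℝ) / b + 1 / c + 1 / q)
  (hIca : 1 < (1 : ℝ) / c + 1 / a + 1 / r)
  (hII : (1 : ℝ) / p + 1 / q + 1 / r < 1)
include hIbc hIca hII

theorem false_of_one_div_add_one_div_le_two_thirds
    (hbc : (1 : ℝ) / b + 1 / c ≤ 2 / 3) (hca : (1 : ℝ) / c + 1 / a ≤ 2 / 3) : False := by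
  have hq := one_div_le_one_div_of_one_div_add_one_lt (n := q) 2 (by norm_num only; linarith)
  have hr := one_div_le_one_div_of_one_div_add_one_lt (n := r) 2 (by norm_num only; linarith)
  have hp : (0 : ℝ) ≤ 1 / p := by positivity
  norm_num only at hq hr
  linarith

include hIab in
theorem false_of_two_le_of_three_le_of_four_le (ha : 2 ≤ a) (hb : 3 ≤ b) (hc : 4 ≤ c) :
    False := by
  have ha' := one_div_natCast_le_one_div_natCast (by norm_num) ha
  have hb' := one_div_natCast_le_one_div_natCast (by norm_num) hb
  have hc' := one_div_natCast_le_one_div_natCast (by norm_num) hc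
  norm_num only at ha' hb' hc'
  have hp := one_div_le_one_div_of_one_div_add_one_lt (n := p) 5 (by norm_num only; linarith)
  have hq := one_div_le_one_div_of_one_div_add_one_lt (n := q) 2 (by norm_num only; linarith)
  have hr := one_div_le_one_div_of_one_div_add_one_lt (n := r) 3 (by norm_num only; linarith)
  norm_num only at hp hq hr
  linarith

include hIab in
theorem face_angles_of_sorted (ha : 2 ≤ a) (hab : a ≤ b) (hbc : b ≤ c) :
    a = 2 ∧ (b = 2 ∧ c ≤ 5 ∨ b = 3 ∧ c = 3) := by
  have ha_eq : a = 2 := by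
    by_contra ha_ne
    have ha' := one_div_natCast_le_one_div_natCast (by norm_num) (by omega : 3 ≤ a)
    have hb' := one_div_natCast_le_one_div_natCast (by norm_num) (by omega : 3 ≤ b)
    have hc' := one_div_natCast_le_one_div_natCast (by norm_num) (by omega : 3 ≤ c)
    norm_num only at ha' hb' hc'
    exact false_of_one_div_add_one_div_le_two_thirds hIbc hIca hII (by linarith) (by linarith)
  subst ha_eq
  have hc_of_hb : b = 2 → c ≤ 5 := by
    rintro rfl
    by_contra! hc
    have hc' := one_div_natCast_le_one_div_natCast (by norm_num) (by omega : 6 ≤ c)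
    norm_num only at hc'
    exact false_of_one_div_add_one_div_le_two_thirds hIbc hIca hII (by norm_num only; linarith)
      (by norm_num only; linarith)
  have h34 : ¬(3 ≤ b ∧ 4 ≤ c) := fun ⟨hb, hc⟩ =>
    false_of_two_le_of_three_le_of_four_le hIab hIbc hIca hII le_rfl hb hc
  omega

end FaceAngles

theorem triangular_face_angle_classification_general
    (n01 n02 n03 n12 n23 n31 : ℕ)
    (h01 : 2 ≤ n01) (h02 : 2 ≤ n02) (h03 : 2 ≤ n03)
    (hI1 : (1 : ℝ) / n01 + 1 / n02 + 1 / n12 > 1)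
    (hI2 : (1 : ℝ) / n02 + 1 / n03 + 1 / n23 > 1)
    (hI3 : (1 : ℝ) / n03 + 1 / n01 + 1 / n31 > 1)
    (hII : (1 : ℝ) / n12 + 1 / n23 + 1 / n31 < 1) :
    ({n01, n02, n03} : Multiset ℕ) = {2, 2, 2} ∨
    ({n01, n02, n03} : Multiset ℕ) = {2, 2, 3} ∨
    ({n01, n02, n03} : Multiset ℕ) = {2, 2, 4} ∨
    ({n01, n02, n03} : Multiset ℕ) = {2, 2, 5} ∨
    ({n01, n02, n03} : Multiset ℕ) = {2, 3, 3} := by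
  wlog h1_le_2 : n01 ≤ n02 generalizing n01 n02 n03 n12 n23 n31 with H
  · have := H n02 n01 n03 n12 n31 n23 h02 h01 h03 (by linarith) (by linarith) (by linarith)
      (by linarith) (by omega)
    rwa [show ({n02, n01, n03} : Multiset ℕ) = {n01, n02, n03} from Multiset.cons_swap _ _ _]
      at this
  wlog h1_le_3 : n01 ≤ n03 generalizing n01 n02 n03 n12 n23 n31 with H
  · have := H n03 n01 n02 n31 n12 n23 h03 h01 h02 hI3 hI1 hI2 (by linarith) (by omega) (by omega)
    rwa [show ({n03, n01, n02} : Multiset ℕ) = {n01, n02, n03} from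
      (Multiset.cons_swap _ _ _).trans (congrArg _ (Multiset.pair_comm _ _))] at this
  wlog h2_le_3 : n02 ≤ n03 generalizing n02 n03 n12 n23 n31 with H
  · have := H n03 n02 n31 n23 n12 h03 h02 (by linarith) (by linarith) (by linarith)
      (by linarith) h1_le_3 h1_le_2 (by omega)
    rwa [Multiset.pair_comm] at this
  obtain ⟨rfl, ⟨rfl, h3⟩ | ⟨rfl, rfl⟩⟩ :=
    face_angles_of_sorted hI1 hI2 hI3 hII h01 h1_le_2 h2_le_3
  · interval_cases n03 <;> simp
  · simp

theorem triangular_face_angle_classification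
    (n01 n02 n03 n12 n23 n31 : ℕ)
    (h01 : 2 ≤ n01) (h02 : 2 ≤ n02) (h03 : 2 ≤ n03)
    (h12 : 2 ≤ n12) (h23 : 2 ≤ n23) (h31 : 2 ≤ n31)
    (hI1 : (1 : ℝ) / n01 + 1 / n02 + 1 / n12 > 1)
    (hI2 : (1 : ℝ) / n02 + 1 / n03 + 1 / n23 > 1)
    (hI3 : (1 : ℝ) / n03 + 1 / n01 + 1 / n31 > 1)
    (hII : (1 : ℝ) / n12 + 1 / n23 + 1 / n31 < 1) :
    ({n01, n02, n03} : Multiset ℕ) = {2, 2, 2} ∨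
    ({n01, n02, n03} : Multiset ℕ) = {2, 2, 3} ∨
    ({n01, n02, n03} : Multiset ℕ) = {2, 2, 4} ∨
    ({n01, n02, n03} : Multiset ℕ) = {2, 2, 5} ∨
    ({n01, n02, n03} : Multiset ℕ) = {2, 3, 3} :=
  triangular_face_angle_classification_general n01 n02 n03 n12 n23 n31 h01 h02 h03 hI1 hI2 hI3 hII
end
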